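/- Let c_p = ∫₀¹ (1 − σ^{p+1})^{−1/2} dσ. For every rising radial arc (u, a, τ) with slope α > 0, one has u(τ) ≤ ( c_p·√(Λ(p+1)/2) / (τ − a) )^{2/(p−1)}. -/

import Mathlib

open Real Set

/-- `P⁺[u](r)`: the Pucci maximal operator `𝓜⁺_{λ,Λ}` evaluated on the Hessian of the
radial function `v(x) = u(|x|)`, expressed through `u'` and `u''`. -/
noncomputable def Pp (n : ℕ) (lam Lam : ℝ) (u' u'' : ℝ → ℝ) (r : ℝ) : ℝ :=
  Lam * max (u'' r) 0 + lam * min (u'' r) 0 +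
    ((n : ℝ) - 1) * (Lam * max (u' r / r) 0 + lam * min (u' r / r) 0)

/-- `P⁻[u](r)`: the Pucci minimal operator `𝓜⁻_{λ,Λ}` evaluated on the Hessian of the
radial function `v(x) = u(|x|)`. -/
noncomputable def Pm (n : ℕ) (lam Lam : ℝ) (u' u'' : ℝ → ℝ) (r : ℝ) : ℝ :=
  lam * max (u'' r) 0 + Lam * min (u'' r) 0 +
    ((n : ℝ) - 1) * (lam * max (u' r / r) 0 + Lam * min (u' r / r) 0)

/-- `u` satisfies the Pucci differential inequalities at `r`:
`−P⁺[u](r) ≤ |u(r)|^{p−1}u(r) ≤ −P⁻[u](r)`. -/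
def PucciIneq (n : ℕ) (lam Lam p : ℝ) (u u' u'' : ℝ → ℝ) (r : ℝ) : Prop :=
  -Pp n lam Lam u' u'' r ≤ |u r| ^ (p - 1) * u r ∧
    |u r| ^ (p - 1) * u r ≤ -Pm n lam Lam u' u'' r

/-- A rising radial arc with slope `α`: `u ∈ C²([a,τ])`, `u(a) = 0`, `u'(a) = α > 0`,
`u > 0` on `(a,τ]`, `u' > 0` on `[a,τ)`, `u'(τ) = 0`, and `u` satisfies the Pucci
differential inequalities on `(a,τ)`. -/
def RisingArc (n : ℕ) (lam Lam p : ℝ) (u u' u'' : ℝ → ℝ) (a τ α : ℝ) : Prop :=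
  0 < a ∧ a < τ ∧ 0 < α ∧
  (∀ r ∈ Set.Icc a τ, HasDerivAt u (u' r) r) ∧
  (∀ r ∈ Set.Icc a τ, HasDerivAt u' (u'' r) r) ∧
  ContinuousOn u'' (Set.Icc a τ) ∧
  u a = 0 ∧ u' a = α ∧
  (∀ r ∈ Set.Ioc a τ, 0 < u r) ∧
  (∀ r ∈ Set.Ico a τ, 0 < u' r) ∧
  u' τ = 0 ∧
  (∀ r ∈ Set.Ioo a τ, PucciIneq n lam Lam p u u' u'' r)

/-- The constant `c_p = ∫₀¹ (1 − σ^{p+1})^{−1/2} dσ`. -/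
noncomputable def cP (p : ℝ) : ℝ := ∫ σ in (0 : ℝ)..1, (1 - σ ^ (p + 1)) ^ (-(1 / 2) : ℝ)

/-! On a rising arc `u > 0` and `u' > 0`, so the Pucci inequalities collapse to
`u ^ p + Λ u'' ≤ 0`, and the energy `u ^ (p + 1) / (p + 1) + Λ u' ^ 2 / 2` decreases.
Comparing with the peak `τ`, where `u' = 0`, gives
`M ^ (p + 1) - u ^ (p + 1) ≤ Λ (p + 1) / 2 · u' ^ 2` for `M = u τ`. For `w = u / M` this says
`w' ≥ M ^ ((p - 1) / 2) / √(Λ (p + 1) / 2) · √(1 - w ^ (p + 1))`, so the function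
`r ↦ ∫₀^{w r} (1 - σ ^ (p + 1)) ^ (-1/2) dσ`, which climbs from `0` to `c_p` on `[a, τ]`,
grows at least at that rate. -/

open MeasureTheory

lemma PucciIneq.rpow_add_mul_le_zero {n : ℕ} {lam Lam p r : ℝ} {u u' u'' : ℝ → ℝ}
    (h : PucciIneq n lam Lam p u u' u'' r) (hn : 1 ≤ n) (hlam : 0 < lam) (hr : 0 ≤ r)
    (hu : 0 < u r) (hu' : 0 ≤ u' r) : u r ^ p + Lam * u'' r ≤ 0 := by
  have hpow : |u r| ^ (p - 1) * u r = u r ^ p := by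
    rw [abs_of_pos hu, ← rpow_add_one hu.ne', sub_add_cancel]
  have hslope : 0 ≤ u' r / r := div_nonneg hu' hr
  have hdrift : 0 ≤ ((n : ℝ) - 1) * (lam * (u' r / r)) :=
    mul_nonneg (by linarith [(Nat.one_le_cast.2 hn : (1 : ℝ) ≤ n)]) (mul_nonneg hlam.le hslope)
  have hq := h.2
  rw [hpow] at hq
  simp only [Pm, max_eq_left hslope, min_eq_right hslope, mul_zero, add_zero] at hq
  have hup : 0 < u r ^ p := rpow_pos_of_pos hu p
  rcases le_or_gt (u'' r) 0 with h'' | h''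
  · rw [max_eq_right h'', min_eq_left h''] at hq
    linarith
  · rw [max_eq_left h''.le, min_eq_right h''.le] at hq
    linarith [mul_pos hlam h'']

noncomputable def peakIntegrand (p σ : ℝ) : ℝ := (1 - σ ^ (p + 1)) ^ (-(1 / 2) : ℝ)

section PeakIntegrand

variable {p : ℝ}

lemma cP_eq_integral_peakIntegrand (p : ℝ) : cP p = ∫ σ in (0 : ℝ)..1, peakIntegrand p σ := rfl

lemma measurable_peakIntegrand (p : ℝ) : Measurable (peakIntegrand p) := by
  unfold peakIntegrand; fun_prop

lemma peakIntegrand_nonneg {σ : ℝ} (hσ : σ ^ (p + 1) ≤ 1) : 0 ≤ peakIntegrand p σ :=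
  rpow_nonneg (by linarith) _

lemma peakIntegrand_eq_inv_sqrt {σ : ℝ} (hσ : σ ^ (p + 1) ≤ 1) :
    peakIntegrand p σ = (√(1 - σ ^ (p + 1)))⁻¹ := by
  rw [peakIntegrand, rpow_neg (by linarith), sqrt_eq_rpow]

lemma peakIntegrand_le_one_sub_rpow (hp : 0 ≤ p) {σ : ℝ} (hσ : σ ∈ Ioo (0 : ℝ) 1) :
    peakIntegrand p σ ≤ (1 - σ) ^ (-(1 / 2) : ℝ) := by
  have hle : σ ^ (p + 1) ≤ σ := by
    simpa using rpow_le_rpow_of_exponent_ge hσ.1 hσ.2.le (by linarith : (1 : ℝ) ≤ p + 1)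
  exact rpow_le_rpow_of_nonpos (by linarith [hσ.2]) (by linarith) (by norm_num)

lemma intervalIntegrable_peakIntegrand (hp : 0 ≤ p) :
    IntervalIntegrable (peakIntegrand p) volume 0 1 := by
  have hdom : IntervalIntegrable (fun σ : ℝ => (1 - σ) ^ (-(1 / 2) : ℝ)) volume 0 1 := by
    simpa using ((intervalIntegral.intervalIntegrable_rpow'
      (by norm_num : (-1 : ℝ) < -(1 / 2))).comp_sub_left 1 (a := 0) (b := 1)).symm
  rw [intervalIntegrable_iff_integrableOn_Ioo_of_le zero_le_one] at hdom ⊢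
  refine hdom.mono' (measurable_peakIntegrand p).aestronglyMeasurable ?_
  filter_upwards [ae_restrict_mem measurableSet_Ioo] with σ hσ
  have hlt : σ ^ (p + 1) < 1 := rpow_lt_one hσ.1.le hσ.2 (by linarith)
  rw [norm_of_nonneg (peakIntegrand_nonneg hlt.le)]
  exact peakIntegrand_le_one_sub_rpow hp hσ

lemma continuousOn_integral_peakIntegrand (hp : 0 ≤ p) :
    ContinuousOn (fun x => ∫ σ in (0 : ℝ)..x, peakIntegrand p σ) (Icc 0 1) := by
  have h := intervalIntegral.continuousOn_primitive_interval'
    (intervalIntegrable_peakIntegrand hp) left_mem_uIcc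
  rwa [uIcc_of_le zero_le_one] at h

lemma hasDerivAt_integral_peakIntegrand (hp : 0 ≤ p) {x : ℝ} (hx : x ∈ Ico (0 : ℝ) 1) :
    HasDerivAt (fun x => ∫ σ in (0 : ℝ)..x, peakIntegrand p σ) (peakIntegrand p x) x := by
  have hlt : x ^ (p + 1) < 1 := rpow_lt_one hx.1 hx.2 (by linarith)
  refine intervalIntegral.integral_hasDerivAt_right
    ((intervalIntegrable_peakIntegrand hp).mono_set ?_)
    ⟨univ, Filter.univ_mem, (measurable_peakIntegrand p).aestronglyMeasurable⟩ ?_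
  · rw [uIcc_of_le hx.1, uIcc_of_le zero_le_one]
    exact Icc_subset_Icc le_rfl hx.2.le
  · have h1 : ContinuousAt (fun σ : ℝ => 1 - σ ^ (p + 1)) x :=
      continuousAt_const.sub (continuousAt_rpow_const _ _ (Or.inr (by linarith)))
    exact h1.rpow_const (Or.inl (by linarith))

lemma inv_le_peakIntegrand_mul {w y c : ℝ} (hw : w ^ (p + 1) < 1) (hc : 0 < c) (hy : 0 ≤ y)
    (h : 1 - w ^ (p + 1) ≤ (c * y) ^ 2) : c⁻¹ ≤ peakIntegrand p w * y := by
  have hsqrt_pos : 0 < √(1 - w ^ (p + 1)) := sqrt_pos.2 (by linarith)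
  have hsqrt : √(1 - w ^ (p + 1)) ≤ c * y := (sqrt_le_left (by positivity)).2 h
  rwa [peakIntegrand_eq_inv_sqrt hw.le, inv_mul_eq_div, le_div_iff₀ hsqrt_pos, inv_mul_le_iff₀ hc]

lemma sub_le_mul_cP_of_one_sub_rpow_le_sq {a b c : ℝ} {w w' : ℝ → ℝ} (hp : 0 ≤ p) (hc : 0 < c)
    (hab : a ≤ b) (hw : ContinuousOn w (Icc a b)) (hmaps : MapsTo w (Icc a b) (Icc 0 1))
    (hwa : w a = 0) (hwb : w b = 1) (hderiv : ∀ r ∈ Ioo a b, HasDerivAt w (w' r) r)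
    (hlt : ∀ r ∈ Ioo a b, w r < 1) (hw'_nonneg : ∀ r ∈ Ioo a b, 0 ≤ w' r)
    (hsq : ∀ r ∈ Ioo a b, 1 - w r ^ (p + 1) ≤ (c * w' r) ^ 2) :
    b - a ≤ c * cP p := by
  set F : ℝ → ℝ := fun x => ∫ σ in (0 : ℝ)..x, peakIntegrand p σ
  have hF' : ∀ r ∈ Ioo a b, HasDerivAt (F ∘ w) (peakIntegrand p (w r) * w' r) r := fun r hr =>
    (hasDerivAt_integral_peakIntegrand hp ⟨(hmaps (Ioo_subset_Icc_self hr)).1, hlt r hr⟩).comp r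
      (hderiv r hr)
  have hslope := (convex_Icc a b).mul_sub_le_image_sub_of_le_deriv (C := c⁻¹)
    ((continuousOn_integral_peakIntegrand hp).comp hw hmaps)
    (fun r hr => (hF' r (by rwa [interior_Icc] at hr)).differentiableAt.differentiableWithinAt)
    (fun r hr => by
      rw [interior_Icc] at hr
      have hwr : w r ^ (p + 1) < 1 :=
        rpow_lt_one (hmaps (Ioo_subset_Icc_self hr)).1 (hlt r hr) (by linarith)
      rw [(hF' r hr).deriv]
      exact inv_le_peakIntegrand_mul hwr hc (hw'_nonneg r hr) (hsq r hr))
    a (left_mem_Icc.2 hab) b (right_mem_Icc.2 hab) hab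
  simp only [Function.comp_apply, hwa, hwb, intervalIntegral.integral_same, sub_zero,
    ← cP_eq_integral_peakIntegrand] at hslope
  exact (inv_mul_le_iff₀ hc).1 hslope

end PeakIntegrand

lemma one_sub_div_rpow_le_sq {p M x y s : ℝ} (hM : 0 < M) (hx : 0 ≤ x)
    (h : M ^ (p + 1) - x ^ (p + 1) ≤ s ^ 2 * y ^ 2) :
    1 - (x / M) ^ (p + 1) ≤ (s / M ^ ((p - 1) / 2) * (y / M)) ^ 2 := by
  have hN : (M ^ ((p - 1) / 2) * M) ^ 2 = M ^ (p + 1) := by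
    rw [← rpow_add_one hM.ne', ← rpow_natCast, ← rpow_mul hM.le]
    ring_nf
  have hMp : 0 < M ^ (p + 1) := rpow_pos_of_pos hM _
  calc 1 - (x / M) ^ (p + 1) = (M ^ (p + 1) - x ^ (p + 1)) / M ^ (p + 1) := by
        rw [div_rpow hx hM.le]; field_simp
    _ ≤ s ^ 2 * y ^ 2 / M ^ (p + 1) := by gcongr
    _ = (s / M ^ ((p - 1) / 2) * (y / M)) ^ 2 := by
        rw [← hN]; have := rpow_pos_of_pos hM ((p - 1) / 2); field_simp

section Arc

variable {p Λ a b : ℝ} {u u' u'' : ℝ → ℝ}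

lemma energy_antitoneOn (hp : 0 ≤ p)
    (hu : ∀ r ∈ Icc a b, HasDerivAt u (u' r) r) (hu' : ∀ r ∈ Icc a b, HasDerivAt u' (u'' r) r)
    (hu'_nonneg : ∀ r ∈ Ioo a b, 0 ≤ u' r) (hineq : ∀ r ∈ Ioo a b, u r ^ p + Λ * u'' r ≤ 0) :
    AntitoneOn (fun r => u r ^ (p + 1) / (p + 1) + Λ * u' r ^ 2 / 2) (Icc a b) := by
  have hE : ∀ r ∈ Icc a b, HasDerivAt (fun r => u r ^ (p + 1) / (p + 1) + Λ * u' r ^ 2 / 2)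
      (u' r * (u r ^ p + Λ * u'' r)) r := fun r hr =>
    ((((hu r hr).rpow_const (Or.inr (by linarith))).div_const (p + 1)).add
      ((((hu' r hr).pow 2).const_mul Λ).div_const 2)).congr_deriv (by
        rw [add_sub_cancel_right]; field_simp; ring)
  refine antitoneOn_of_hasDerivWithinAt_nonpos (convex_Icc a b)
    (f' := fun r => u' r * (u r ^ p + Λ * u'' r))
    (fun r hr => (hE r hr).continuousAt.continuousWithinAt) (fun r hr => ?_) (fun r hr => ?_)
  all_goals rw [interior_Icc] at hr
  · exact (hE r (Ioo_subset_Icc_self hr)).hasDerivWithinAt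
  · exact mul_nonpos_of_nonneg_of_nonpos (hu'_nonneg r hr) (hineq r hr)

lemma peak_rpow_sub_rpow_le {r : ℝ} (hp : 0 ≤ p)
    (hu : ∀ r ∈ Icc a b, HasDerivAt u (u' r) r) (hu' : ∀ r ∈ Icc a b, HasDerivAt u' (u'' r) r)
    (hu'_nonneg : ∀ r ∈ Ioo a b, 0 ≤ u' r) (hineq : ∀ r ∈ Ioo a b, u r ^ p + Λ * u'' r ≤ 0)
    (hu'b : u' b = 0) (hr : r ∈ Icc a b) :
    u b ^ (p + 1) - u r ^ (p + 1) ≤ Λ * (p + 1) / 2 * u' r ^ 2 := by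
  have h := energy_antitoneOn hp hu hu' hu'_nonneg hineq hr (right_mem_Icc.2 (hr.1.trans hr.2))
    hr.2
  simp only [hu'b] at h
  have hp1 : 0 < p + 1 := by linarith
  field_simp at h
  linarith

lemma peak_rpow_le_cP_mul_sqrt_div (hp : 0 ≤ p) (hab : a < b)
    (hu : ∀ r ∈ Icc a b, HasDerivAt u (u' r) r) (hu' : ∀ r ∈ Icc a b, HasDerivAt u' (u'' r) r)
    (hua : u a = 0) (hu'_pos : ∀ r ∈ Ioo a b, 0 < u' r) (hu'b : u' b = 0)
    (hineq : ∀ r ∈ Ioo a b, u r ^ p + Λ * u'' r ≤ 0) :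
    u b ^ ((p - 1) / 2) ≤ cP p * √(Λ * (p + 1) / 2) / (b - a) := by
  have hcont : ContinuousOn u (Icc a b) := fun r hr => (hu r hr).continuousAt.continuousWithinAt
  have hmono : StrictMonoOn u (Icc a b) :=
    strictMonoOn_of_hasDerivWithinAt_pos (convex_Icc a b) hcont
      (fun r hr => (hu r (interior_subset hr)).hasDerivWithinAt)
      (fun r hr => hu'_pos r (by rwa [interior_Icc] at hr))
  have ha : a ∈ Icc a b := left_mem_Icc.2 hab.le
  have hb : b ∈ Icc a b := right_mem_Icc.2 hab.le
  set M := u b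
  have hM : 0 < M := hua ▸ hmono ha hb hab
  have hnonneg : ∀ r ∈ Icc a b, 0 ≤ u r := fun r hr => hua ▸ hmono.monotoneOn ha hr hr.1
  have henergy : ∀ r ∈ Icc a b, M ^ (p + 1) - u r ^ (p + 1) ≤ Λ * (p + 1) / 2 * u' r ^ 2 :=
    fun r hr => peak_rpow_sub_rpow_le hp hu hu' (fun r hr => (hu'_pos r hr).le) hineq hu'b hr
  have hκ : 0 < Λ * (p + 1) / 2 := by
    have h := henergy a ha
    rw [hua, zero_rpow (by linarith), sub_zero] at h
    exact pos_of_mul_pos_left ((rpow_pos_of_pos hM _).trans_le h) (sq_nonneg _)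
  set s := √(Λ * (p + 1) / 2)
  have hMe : 0 < M ^ ((p - 1) / 2) := rpow_pos_of_pos hM _
  have hmaps : MapsTo (fun r => u r / M) (Icc a b) (Icc 0 1) := fun r hr =>
    ⟨div_nonneg (hnonneg r hr) hM.le, (div_le_one hM).2 (hmono.monotoneOn hr hb hr.2)⟩
  have hsq : ∀ r ∈ Ioo a b, 1 - (u r / M) ^ (p + 1) ≤ (s / M ^ ((p - 1) / 2) * (u' r / M)) ^ 2 :=
    fun r hr => one_sub_div_rpow_le_sq hM (hnonneg r (Ioo_subset_Icc_self hr))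
      (by rw [sq_sqrt hκ.le]; exact henergy r (Ioo_subset_Icc_self hr))
  have hrise : b - a ≤ s / M ^ ((p - 1) / 2) * cP p :=
    sub_le_mul_cP_of_one_sub_rpow_le_sq hp (div_pos (sqrt_pos.2 hκ) hMe) hab.le
      (hcont.div_const M) hmaps (by simp [hua]) (div_self hM.ne')
      (fun r hr => (hu r (Ioo_subset_Icc_self hr)).div_const M)
      (fun r hr => (div_lt_one hM).2 (hmono (Ioo_subset_Icc_self hr) hb hr.2))
      (fun r hr => div_nonneg (hu'_pos r hr).le hM.le) hsq
  rw [div_mul_eq_mul_div, le_div_iff₀ hMe] at hrise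
  rw [le_div_iff₀ (sub_pos.2 hab)]
  linarith

end Arc

theorem rising_arc_peak_pointwise_upper_bound_general
    (n : ℕ) (hn : 2 ≤ n) (lam Lam p : ℝ) (hlam : 0 < lam) (hp : 1 < p)
    (a τ α : ℝ) (u u' u'' : ℝ → ℝ)
    (harc : RisingArc n lam Lam p u u' u'' a τ α) :
    u τ ≤ (cP p * Real.sqrt (Lam * (p + 1) / 2) / (τ - a)) ^ (2 / (p - 1)) := by
  obtain ⟨ha, haτ, -, hu, hu', -, hua, -, hu_pos, hu'_pos, hu'τ, hpucci⟩ := harc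
  have hineq : ∀ r ∈ Ioo a τ, u r ^ p + Lam * u'' r ≤ 0 := fun r hr =>
    (hpucci r hr).rpow_add_mul_le_zero (by omega) hlam (ha.trans hr.1).le
      (hu_pos r (Ioo_subset_Ioc_self hr)) (hu'_pos r (Ioo_subset_Ico_self hr)).le
  have hbound := peak_rpow_le_cP_mul_sqrt_div (by linarith) haτ hu hu' hua
    (fun r hr => hu'_pos r (Ioo_subset_Ico_self hr)) hu'τ hineq
  have hpeak : 0 ≤ u τ := (hu_pos τ (right_mem_Ioc.2 haτ)).le
  rw [← inv_div (p - 1) 2]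
  exact (le_rpow_inv_iff_of_pos hpeak ((rpow_nonneg hpeak _).trans hbound) (by linarith)).2 hbound

/-- Estimate (2.11) in the paper:
`u(τ) ≤ (c_p √(Λ(p+1)/2) / (τ−a))^{2/(p−1)}` for any rising radial arc. -/
theorem rising_arc_peak_pointwise_upper_bound
    (n : ℕ) (hn : 2 ≤ n) (lam Lam p : ℝ) (hlam : 0 < lam) (hlL : lam ≤ Lam) (hp : 1 < p)
    (a τ α : ℝ) (u u' u'' : ℝ → ℝ)
    (harc : RisingArc n lam Lam p u u' u'' a τ α) :
    u τ ≤ (cP p * Real.sqrt (Lam * (p + 1) / 2) / (τ - a)) ^ (2 / (p - 1)) :=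
  rising_arc_peak_pointwise_upper_bound_general n hn lam Lam p hlam hp a τ α u u' u'' harc
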